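/- Let n ≥ 2 and let K ∈ 𝒦₀(ℝⁿ). Then ∫_{ℝⁿ} e^{−π·rdist(x,K)²} dx = Σ_{j=0}^{n} Ṽ_j(K); that is, the dual Wills functional W̃(K) := ∫_{ℝⁿ} e^{−π·rdist(x,K)²} dx equals the sum of all dual volumes of K. -/

import Mathlib

open MeasureTheory

open MeasureTheory

/-- The uniform (rotation invariant) probability measure `σ` on the unit sphere
`S^{n-1} ⊆ ℝⁿ`. -/
noncomputable def sphereProb (n : ℕ) :
    Measure (Metric.sphere (0 : EuclideanSpace ℝ (Fin n)) 1) :=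
  ((volume : Measure (EuclideanSpace ℝ (Fin n))).toSphere Set.univ)⁻¹ •
    (volume : Measure (EuclideanSpace ℝ (Fin n))).toSphere

/-- The radial function `ρ_K(u) = max {r : r • u ∈ K}` of a set `K ⊆ ℝⁿ`. -/
noncomputable def radialFn {n : ℕ} (K : Set (EuclideanSpace ℝ (Fin n)))
    (u : EuclideanSpace ℝ (Fin n)) : ℝ :=
  sSup {r : ℝ | r • u ∈ K}

/-- The minimal radial distance `rdist(x, K)`:  `0` if `x ∈ K`, and
`‖x‖ - ρ_K(x/‖x‖)` otherwise. -/
noncomputable def rdist {n : ℕ} (K : Set (EuclideanSpace ℝ (Fin n)))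
    (x : EuclideanSpace ℝ (Fin n)) : ℝ :=
  letI := Classical.dec (x ∈ K)
  if x ∈ K then 0 else ‖x‖ - radialFn K (‖x‖⁻¹ • x)

/-- `|D_k| = π^{k/2} / Γ(k/2 + 1)`, the volume of the `k`-dimensional unit ball. -/
noncomputable def unitBallVolF (k : ℕ) : ℝ :=
  Real.pi ^ ((k : ℝ) / 2) / Real.Gamma ((k : ℝ) / 2 + 1)

/-- The `j`-th dual volume `Ṽ_j(K) = C(n,j)·(|Dₙ|/|D_{n-j}|)·∫_{S^{n-1}} ρ_K(u)^j dσ(u)`. -/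
noncomputable def dualVolInt (n j : ℕ) (K : Set (EuclideanSpace ℝ (Fin n))) : ℝ :=
  (n.choose j : ℝ) * (unitBallVolF n / unitBallVolF (n - j)) *
    ∫ u : Metric.sphere (0 : EuclideanSpace ℝ (Fin n)) 1,
      radialFn K ↑u ^ j ∂(sphereProb n)

/-!
In polar coordinates `x = r • u`, convexity of `K` gives `rdist K (r • u) = max 0 (r - ρ_K u)`, so
the radial integral splits at `r = ρ_K u`: the part inside `K` contributes `ρ ^ n / n`, and after
the shift `r = t + ρ` the part outside is a binomial sum of the Gaussian half-moments
`∫₀^∞ tᵏ e^{-πt²} dt = 1 / ((k + 1) |D_{k+1}|)`. As the surface measure of `S^{n-1}` is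
`n |D_n| σ`, collecting the powers of `ρ_K` produces exactly the coefficients
`C(n,j) |D_n| / |D_{n-j}|` of the dual volumes.
-/

open Set Metric Real Filter Topology
open scoped ENNReal

section RadialFunction

variable {n : ℕ} {K : Set (EuclideanSpace ℝ (Fin n))}

lemma gauge_pos_of_ne_zero (hKcp : IsCompact K) (hK0 : K ∈ 𝓝 0)
    {x : EuclideanSpace ℝ (Fin n)} (hx : x ≠ 0) : 0 < gauge K x :=
  (gauge_pos (absorbent_nhds_zero hK0)
    (NormedSpace.isVonNBounded_of_isBounded _ hKcp.isBounded)).2 hx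

lemma smul_mem_iff_mul_gauge_le_one (hKcp : IsCompact K) (hKcv : Convex ℝ K) (hK0 : K ∈ 𝓝 0)
    (u : EuclideanSpace ℝ (Fin n)) {r : ℝ} (hr : 0 ≤ r) : r • u ∈ K ↔ r * gauge K u ≤ 1 := by
  rw [← smul_eq_mul, ← gauge_smul_of_nonneg hr, gauge_le_one_iff_mem_closure hKcv hK0,
    hKcp.isClosed.closure_eq]

/-- At `u = 0` both sides are junk values: `sSup univ = 0` and `(gauge K 0)⁻¹ = 0⁻¹ = 0`. -/
lemma radialFn_eq_inv_gauge (hKcp : IsCompact K) (hKcv : Convex ℝ K) (hK0 : K ∈ 𝓝 0)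
    (u : EuclideanSpace ℝ (Fin n)) : radialFn K u = (gauge K u)⁻¹ := by
  rcases eq_or_ne u 0 with rfl | hu
  · simp [radialFn, mem_of_mem_nhds hK0]
  have hg := gauge_pos_of_ne_zero hKcp hK0 hu
  refine IsGreatest.csSup_eq ⟨?_, fun r hr => ?_⟩
  · rw [mem_ofPred_eq, smul_mem_iff_mul_gauge_le_one hKcp hKcv hK0 u (by positivity),
      inv_mul_cancel₀ hg.ne']
  · rcases le_or_gt r 0 with h | h
    · exact h.trans (by positivity)
    · rwa [mem_ofPred_eq, smul_mem_iff_mul_gauge_le_one hKcp hKcv hK0 u h.le,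
        ← le_div_iff₀ hg, one_div] at hr

lemma smul_mem_iff_le_radialFn (hKcp : IsCompact K) (hKcv : Convex ℝ K) (hK0 : K ∈ 𝓝 0)
    {u : EuclideanSpace ℝ (Fin n)} (hu : u ≠ 0) {r : ℝ} (hr : 0 ≤ r) :
    r • u ∈ K ↔ r ≤ radialFn K u := by
  rw [smul_mem_iff_mul_gauge_le_one hKcp hKcv hK0 u hr, radialFn_eq_inv_gauge hKcp hKcv hK0,
    ← one_div, le_div_iff₀ (gauge_pos_of_ne_zero hKcp hK0 hu)]

lemma rdist_smul (hKcp : IsCompact K) (hKcv : Convex ℝ K) (hK0 : K ∈ 𝓝 0)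
    (u : sphere (0 : EuclideanSpace ℝ (Fin n)) 1) {r : ℝ} (hr : 0 < r) :
    rdist K (r • (u : EuclideanSpace ℝ (Fin n))) = max 0 (r - radialFn K u) := by
  have hu : (u : EuclideanSpace ℝ (Fin n)) ≠ 0 := ne_of_mem_sphere u.2 one_ne_zero
  have hnorm : ‖r • (u : EuclideanSpace ℝ (Fin n))‖ = r := by
    rw [norm_smul, norm_eq_of_mem_sphere u, mul_one, Real.norm_of_nonneg hr.le]
  rw [rdist, hnorm, inv_smul_smul₀ hr.ne']
  split_ifs with hmem
  · rw [smul_mem_iff_le_radialFn hKcp hKcv hK0 hu hr.le] at hmem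
    exact (max_eq_left (by linarith)).symm
  · rw [smul_mem_iff_le_radialFn hKcp hKcv hK0 hu hr.le, not_le] at hmem
    exact (max_eq_right (by linarith)).symm

lemma measurable_rdist (hKcp : IsCompact K) (hKcv : Convex ℝ K) (hK0 : K ∈ 𝓝 0) :
    Measurable (rdist K) := by
  have hρ : Measurable (radialFn K) := by
    simp_rw [funext (radialFn_eq_inv_gauge hKcp hKcv hK0)]
    exact (continuous_gauge hKcv hK0).measurable.inv
  unfold rdist
  exact Measurable.ite hKcp.isClosed.measurableSet measurable_const
    (measurable_norm.sub (hρ.comp (measurable_norm.inv.smul measurable_id)))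

lemma continuous_radialFn_sphere (hKcp : IsCompact K) (hKcv : Convex ℝ K) (hK0 : K ∈ 𝓝 0) :
    Continuous fun u : sphere (0 : EuclideanSpace ℝ (Fin n)) 1 => radialFn K u := by
  simp_rw [radialFn_eq_inv_gauge hKcp hKcv hK0]
  exact ((continuous_gauge hKcv hK0).comp continuous_subtype_val).inv₀ fun u =>
    (gauge_pos_of_ne_zero hKcp hK0 (ne_of_mem_sphere u.2 one_ne_zero)).ne'

lemma radialFn_pos (hKcp : IsCompact K) (hKcv : Convex ℝ K) (hK0 : K ∈ 𝓝 0)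
    {u : EuclideanSpace ℝ (Fin n)} (hu : u ≠ 0) : 0 < radialFn K u := by
  rw [radialFn_eq_inv_gauge hKcp hKcv hK0]
  exact inv_pos.2 (gauge_pos_of_ne_zero hKcp hK0 hu)

end RadialFunction

lemma integrableOn_Ioi_pow_mul_exp_neg_mul_sq {b : ℝ} (hb : 0 < b) (k : ℕ) :
    IntegrableOn (fun t : ℝ => t ^ k * exp (-b * t ^ 2)) (Ioi 0) := by
  simpa only [rpow_natCast] using
    integrableOn_rpow_mul_exp_neg_mul_sq hb (neg_one_lt_zero.trans_le k.cast_nonneg)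

lemma unitBallVolF_pos (k : ℕ) : 0 < unitBallVolF k := by
  unfold unitBallVolF
  have := Gamma_pos_of_pos (by positivity : (0 : ℝ) < k / 2 + 1)
  positivity

lemma unitBallVolF_zero : unitBallVolF 0 = 1 := by
  simp [unitBallVolF]

lemma integral_Ioi_pow_mul_exp_neg_pi_sq (k : ℕ) :
    ∫ t in Ioi (0 : ℝ), t ^ k * exp (-π * t ^ 2) = ((k + 1) * unitBallVolF (k + 1))⁻¹ := by
  have hs : (0 : ℝ) < (k + 1) / 2 := by positivity
  have hΓ := Gamma_pos_of_pos hs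
  have hπ : π ^ (-((k + 1 : ℝ) / 2)) * π ^ ((k + 1 : ℝ) / 2) = 1 := by
    rw [← rpow_add pi_pos, neg_add_cancel, rpow_zero]
  have h :=
    integral_rpow_mul_exp_neg_mul_rpow two_pos (neg_one_lt_zero.trans_le k.cast_nonneg) pi_pos
  simp only [rpow_natCast, rpow_two] at h
  rw [h, unitBallVolF, Nat.cast_add_one, Gamma_add_one hs.ne', neg_div]
  field_simp
  linear_combination hπ

lemma integral_Ioi_add_pow_mul_exp_neg_pi_sq (m : ℕ) (ρ : ℝ) :
    IntegrableOn (fun t : ℝ => (t + ρ) ^ m * exp (-π * t ^ 2)) (Ioi 0) ∧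
      ∫ t in Ioi (0 : ℝ), (t + ρ) ^ m * exp (-π * t ^ 2) =
        ∑ k ∈ Finset.range (m + 1),
          m.choose k * ρ ^ (m - k) * ((k + 1) * unitBallVolF (k + 1))⁻¹ := by
  have hexpand : ∀ t : ℝ, (t + ρ) ^ m * exp (-π * t ^ 2) =
      ∑ k ∈ Finset.range (m + 1), m.choose k * ρ ^ (m - k) * (t ^ k * exp (-π * t ^ 2)) := by
    intro t
    rw [add_pow, Finset.sum_mul]
    exact Finset.sum_congr rfl fun k _ => by ring
  have hint : ∀ k, IntegrableOn (fun t : ℝ => m.choose k * ρ ^ (m - k) * (t ^ k * exp (-π * t ^ 2)))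
      (Ioi 0) := fun k => (integrableOn_Ioi_pow_mul_exp_neg_mul_sq pi_pos k).const_mul _
  simp_rw [hexpand]
  refine ⟨integrable_finsetSum _ fun k _ => hint k, ?_⟩
  rw [integral_finsetSum _ fun k _ => hint k]
  simp_rw [integral_const_mul, integral_Ioi_pow_mul_exp_neg_pi_sq]

lemma integral_Ioi_pow_mul_exp_neg_pi_sq_max_sub (m : ℕ) {ρ : ℝ} (hρ : 0 < ρ) :
    IntegrableOn (fun r : ℝ => r ^ m * exp (-π * max 0 (r - ρ) ^ 2)) (Ioi 0) ∧
      ∫ r in Ioi (0 : ℝ), r ^ m * exp (-π * max 0 (r - ρ) ^ 2) =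
        ρ ^ (m + 1) / (m + 1) + ∫ t in Ioi (0 : ℝ), (t + ρ) ^ m * exp (-π * t ^ 2) := by
  set f := fun r : ℝ => r ^ m * exp (-π * max 0 (r - ρ) ^ 2)
  have hf_Ioc : EqOn f (fun r => r ^ m) (Ioc 0 ρ) := fun r hr => by
    simp [f, max_eq_left (sub_nonpos.2 hr.2)]
  have hf_Ioi : ∀ t ∈ Ioi (0 : ℝ), f (t + ρ) = (t + ρ) ^ m * exp (-π * t ^ 2) := fun t ht => by
    simp only [f, add_sub_cancel_right, max_eq_right ht.out.le]
  have hshift := measurePreserving_add_right (volume : Measure ℝ) ρ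
  have hemb := measurableEmbedding_addRight ρ
  have hpre : (· + ρ) ⁻¹' Ioi ρ = Ioi (0 : ℝ) := by ext t; simp
  have hint_Ioc : IntegrableOn f (Ioc 0 ρ) :=
    (continuous_pow m).integrableOn_Ioc.congr_fun hf_Ioc.symm measurableSet_Ioc
  have hint_Ioi : IntegrableOn f (Ioi ρ) := by
    rw [← hshift.integrableOn_comp_preimage hemb, hpre]
    exact (integral_Ioi_add_pow_mul_exp_neg_pi_sq m ρ).1.congr_fun
      (fun t ht => (hf_Ioi t ht).symm) measurableSet_Ioi
  have hsplit := Ioc_union_Ioi_eq_Ioi hρ.le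
  refine ⟨hsplit ▸ hint_Ioc.union hint_Ioi, ?_⟩
  rw [← hsplit, setIntegral_union Ioc_disjoint_Ioi_same measurableSet_Ioi hint_Ioc hint_Ioi,
    setIntegral_congr_fun measurableSet_Ioc hf_Ioc, ← intervalIntegral.integral_of_le hρ.le,
    integral_pow, ← hshift.setIntegral_preimage_emb hemb, hpre,
    setIntegral_congr_fun measurableSet_Ioi hf_Ioi, hsplit]
  simp

/-- `dualVolInt n j K` is definitionally `dualVolCoeff n j * ∫ u, ρ_K u ^ j ∂σ`. -/
noncomputable def dualVolCoeff (n j : ℕ) : ℝ :=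
  n.choose j * (unitBallVolF n / unitBallVolF (n - j))

lemma dualVolCoeff_nonneg (n j : ℕ) : 0 ≤ dualVolCoeff n j := by
  have := unitBallVolF_pos n
  have := unitBallVolF_pos (n - j)
  unfold dualVolCoeff
  positivity

lemma dualVolCoeff_reflect {m k : ℕ} (hk : k ≤ m) :
    dualVolCoeff (m + 1) (m - k) =
      (m + 1) * unitBallVolF (m + 1) * (m.choose k * ((k + 1) * unitBallVolF (k + 1))⁻¹) := by
  have hchoose : ((m + 1).choose (m - k) : ℝ) * (k + 1) = (m + 1) * m.choose k := by
    rw [Nat.choose_symm_of_eq_add (by omega : m + 1 = (m - k) + (k + 1))]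
    exact_mod_cast (Nat.add_one_mul_choose_eq m k).symm
  have hV := unitBallVolF_pos (k + 1)
  rw [dualVolCoeff, show m + 1 - (m - k) = k + 1 by omega]
  field_simp
  linear_combination unitBallVolF (m + 1) * hchoose

lemma sum_dualVolCoeff_mul_pow (m : ℕ) (ρ : ℝ) :
    ∑ j ∈ Finset.range (m + 2), dualVolCoeff (m + 1) j * ρ ^ j =
      (m + 1) * unitBallVolF (m + 1) * (ρ ^ (m + 1) / (m + 1) + ∑ k ∈ Finset.range (m + 1),
        m.choose k * ρ ^ (m - k) * ((k + 1) * unitBallVolF (k + 1))⁻¹) := by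
  have htop : dualVolCoeff (m + 1) (m + 1) = unitBallVolF (m + 1) := by
    simp [dualVolCoeff, unitBallVolF_zero]
  symm
  rw [Finset.sum_range_succ _ (m + 1), htop,
    ← Finset.sum_range_reflect (fun j => dualVolCoeff (m + 1) j * ρ ^ j), mul_add, Finset.mul_sum,
    add_comm]
  congr 1
  · refine Finset.sum_congr rfl fun k hk => ?_
    rw [show m + 1 - 1 - k = m - k by omega,
      dualVolCoeff_reflect (Nat.lt_succ_iff.1 (Finset.mem_range.1 hk))]
    ring
  · field_simp

lemma lintegral_eq_lintegral_toSphere_lintegral_Ioi {E : Type*} [NormedAddCommGroup E]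
    [NormedSpace ℝ E] [MeasurableSpace E] [BorelSpace E] [FiniteDimensional ℝ E] [Nontrivial E]
    (μ : Measure E) [μ.IsAddHaarMeasure] {f : E → ℝ≥0∞} (hf : Measurable f) :
    ∫⁻ x, f x ∂μ = ∫⁻ u, (∫⁻ r in Ioi (0 : ℝ),
      ENNReal.ofReal (r ^ (Module.finrank ℝ E - 1)) * f (r • (u : E))) ∂μ.toSphere := by
  have hpolar : Measurable fun p : sphere (0 : E) 1 × Ioi (0 : ℝ) => f ((p.2 : ℝ) • (p.1 : E)) :=
    hf.comp ((continuous_subtype_val.comp continuous_snd).smul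
      (continuous_subtype_val.comp continuous_fst)).measurable
  calc ∫⁻ x, f x ∂μ = ∫⁻ x in {0}ᶜ, f x ∂μ := by rw [restrict_compl_singleton]
    _ = ∫⁻ x : ({0}ᶜ : Set E), f x ∂μ.comap Subtype.val :=
      (lintegral_subtype_comap (measurableSet_singleton 0).compl f).symm
    _ = ∫⁻ p, f ((p.2 : ℝ) • (p.1 : E))
          ∂μ.toSphere.prod (Measure.volumeIoiPow (Module.finrank ℝ E - 1)) := by
      rw [← (μ.measurePreserving_homeomorphUnitSphereProd).lintegral_comp_emb
        (Homeomorph.measurableEmbedding _)]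
      refine lintegral_congr fun x => ?_
      simp [smul_inv_smul₀ (norm_ne_zero_iff.2 x.2)]
    _ = _ := by
      rw [lintegral_prod _ hpolar.aemeasurable]
      refine lintegral_congr fun u => ?_
      have hray : Measurable fun r : Ioi (0 : ℝ) => f ((r : ℝ) • (u : E)) :=
        hf.comp (measurable_subtype_coe.smul_const _)
      rw [Measure.volumeIoiPow, lintegral_withDensity_eq_lintegral_mul _
          (measurable_subtype_coe.pow_const _).ennreal_ofReal hray,
        ← lintegral_subtype_comap measurableSet_Ioi]
      rfl

lemma toSphere_volume_eq_smul_sphereProb {n : ℕ} (hn : n ≠ 0) :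
    (volume : Measure (EuclideanSpace ℝ (Fin n))).toSphere =
      ENNReal.ofReal (n * unitBallVolF n) • sphereProb n := by
  have : Nonempty (Fin n) := ⟨⟨0, Nat.pos_of_ne_zero hn⟩⟩
  have hsqrt : √π ^ n = π ^ ((n : ℝ) / 2) := by
    rw [sqrt_eq_rpow, ← rpow_natCast, ← rpow_mul pi_pos.le, one_div_mul_eq_div]
  have hmass : (volume : Measure (EuclideanSpace ℝ (Fin n))).toSphere univ =
      ENNReal.ofReal (n * unitBallVolF n) := by
    rw [Measure.toSphere_apply_univ, EuclideanSpace.volume_ball, finrank_euclideanSpace_fin,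
      Fintype.card_fin, ENNReal.ofReal_one, one_pow, one_mul, hsqrt,
      ENNReal.ofReal_mul (Nat.cast_nonneg n), ENNReal.ofReal_natCast]
    rfl
  have hpos : 0 < (n : ℝ) * unitBallVolF n :=
    mul_pos (Nat.cast_pos.2 (Nat.pos_of_ne_zero hn)) (unitBallVolF_pos n)
  rw [sphereProb, hmass, smul_smul, ENNReal.mul_inv_cancel (ENNReal.ofReal_pos.2 hpos).ne'
    ENNReal.ofReal_ne_top, one_smul]

lemma isProbabilityMeasure_sphereProb {n : ℕ} (hn : n ≠ 0) :
    IsProbabilityMeasure (sphereProb n) := by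
  have : Nontrivial (EuclideanSpace ℝ (Fin n)) := by
    have : Nonempty (Fin n) := ⟨⟨0, Nat.pos_of_ne_zero hn⟩⟩
    infer_instance
  constructor
  rw [sphereProb, Measure.smul_apply, smul_eq_mul, ENNReal.inv_mul_cancel
    ((Measure.measure_univ_ne_zero).2 (Measure.toSphere_ne_zero _)) (measure_ne_top _ _)]

section DualWills

variable {n : ℕ} {K : Set (EuclideanSpace ℝ (Fin n))}

lemma measurable_exp_neg_pi_rdist_sq (hKcp : IsCompact K) (hKcv : Convex ℝ K) (hK0 : K ∈ 𝓝 0) :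
    Measurable fun x => exp (-π * rdist K x ^ 2) :=
  measurable_exp.comp (((measurable_rdist hKcp hKcv hK0).pow_const 2).const_mul _)

lemma lintegral_Ioi_exp_neg_pi_rdist_smul_sq (hKcp : IsCompact K) (hKcv : Convex ℝ K)
    (hK0 : K ∈ 𝓝 0) (u : sphere (0 : EuclideanSpace ℝ (Fin n)) 1) (m : ℕ) :
    ENNReal.ofReal ((m + 1) * unitBallVolF (m + 1)) *
        ∫⁻ r in Ioi (0 : ℝ), ENNReal.ofReal (r ^ m) *
          ENNReal.ofReal (exp (-π * rdist K (r • (u : EuclideanSpace ℝ (Fin n))) ^ 2)) =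
      ENNReal.ofReal (∑ j ∈ Finset.range (m + 2), dualVolCoeff (m + 1) j * radialFn K u ^ j) := by
  have hρ := radialFn_pos hKcp hKcv hK0 (ne_of_mem_sphere u.2 one_ne_zero)
  obtain ⟨hint, hval⟩ := integral_Ioi_pow_mul_exp_neg_pi_sq_max_sub m hρ
  have hradial : ∫⁻ r in Ioi (0 : ℝ), ENNReal.ofReal (r ^ m) *
        ENNReal.ofReal (exp (-π * rdist K (r • (u : EuclideanSpace ℝ (Fin n))) ^ 2)) =
      ∫⁻ r in Ioi (0 : ℝ), ENNReal.ofReal (r ^ m * exp (-π * max 0 (r - radialFn K u) ^ 2)) :=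
    setLIntegral_congr_fun measurableSet_Ioi fun r hr => by
      rw [rdist_smul hKcp hKcv hK0 u hr, ENNReal.ofReal_mul (pow_nonneg hr.out.le m)]
  have hnonneg : 0 ≤ᵐ[volume.restrict (Ioi 0)]
      fun r : ℝ => r ^ m * exp (-π * max 0 (r - radialFn K u) ^ 2) :=
    (ae_restrict_iff' measurableSet_Ioi).2 (.of_forall fun r hr =>
      mul_nonneg (pow_nonneg hr.out.le m) (exp_pos _).le)
  rw [hradial, ← ofReal_integral_eq_lintegral_ofReal hint hnonneg, hval,
    (integral_Ioi_add_pow_mul_exp_neg_pi_sq m _).2, ← ENNReal.ofReal_mul (by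
      have := unitBallVolF_pos (m + 1); positivity), sum_dualVolCoeff_mul_pow]

lemma lintegral_exp_neg_pi_rdist_sq (hn : n ≠ 0) (hKcp : IsCompact K) (hKcv : Convex ℝ K)
    (hK0 : K ∈ 𝓝 0) :
    ∫⁻ x, ENNReal.ofReal (exp (-π * rdist K x ^ 2)) =
      ∫⁻ u, ENNReal.ofReal (∑ j ∈ Finset.range (n + 1), dualVolCoeff n j * radialFn K u ^ j)
        ∂sphereProb n := by
  obtain ⟨m, rfl⟩ := Nat.exists_eq_add_one_of_ne_zero hn
  have : Nonempty (Fin (m + 1)) := ⟨0⟩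
  rw [lintegral_eq_lintegral_toSphere_lintegral_Ioi volume
      (measurable_exp_neg_pi_rdist_sq hKcp hKcv hK0).ennreal_ofReal,
    toSphere_volume_eq_smul_sphereProb hn, lintegral_smul_measure, smul_eq_mul,
    ← lintegral_const_mul' _ _ ENNReal.ofReal_ne_top, finrank_euclideanSpace_fin, Nat.add_sub_cancel]
  refine lintegral_congr fun u => ?_
  push_cast
  exact lintegral_Ioi_exp_neg_pi_rdist_smul_sq hKcp hKcv hK0 u m

end DualWills

/-- For a convex body `K ⊆ ℝⁿ` (`n ≥ 2`) containing the origin in its interior, the dual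
Wills functional `W̃(K) = ∫_{ℝⁿ} e^{-π·rdist(x,K)²} dx` equals `Σ_{j=0}^n Ṽ_j(K)`. -/
theorem stmt8 {n : ℕ} (hn : 2 ≤ n)
    (K : Set (EuclideanSpace ℝ (Fin n)))
    (hKcp : IsCompact K) (hKcv : Convex ℝ K) (hKint : 0 ∈ interior K) :
    (∫ x : EuclideanSpace ℝ (Fin n), Real.exp (-Real.pi * rdist K x ^ 2))
      = ∑ j ∈ Finset.range (n + 1), dualVolInt n j K := by
  have hK0 : K ∈ 𝓝 0 := mem_interior_iff_mem_nhds.1 hKint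
  have := isProbabilityMeasure_sphereProb (n := n) (by omega)
  have hρ := continuous_radialFn_sphere hKcp hKcv hK0
  set P := fun u : sphere (0 : EuclideanSpace ℝ (Fin n)) 1 =>
    ∑ j ∈ Finset.range (n + 1), dualVolCoeff n j * radialFn K u ^ j
  have hP_nonneg : 0 ≤ P := fun u => Finset.sum_nonneg fun j _ =>
    mul_nonneg (dualVolCoeff_nonneg n j)
      (pow_nonneg (radialFn_pos hKcp hKcv hK0 (ne_of_mem_sphere u.2 one_ne_zero)).le j)
  have hterm : ∀ j, Continuous fun u : sphere (0 : EuclideanSpace ℝ (Fin n)) 1 =>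
      dualVolCoeff n j * radialFn K u ^ j := fun j => continuous_const.mul (hρ.pow j)
  calc (∫ x, exp (-π * rdist K x ^ 2))
      = (∫⁻ x, ENNReal.ofReal (exp (-π * rdist K x ^ 2))).toReal :=
        integral_eq_lintegral_of_nonneg_ae (.of_forall fun x => (exp_pos _).le)
          (measurable_exp_neg_pi_rdist_sq hKcp hKcv hK0).aestronglyMeasurable
    _ = ∫ u, P u ∂sphereProb n := by
        rw [lintegral_exp_neg_pi_rdist_sq (by omega) hKcp hKcv hK0,
          integral_eq_lintegral_of_nonneg_ae (.of_forall hP_nonneg)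
            (continuous_finsetSum _ fun j _ => hterm j).aestronglyMeasurable]
    _ = ∑ j ∈ Finset.range (n + 1), dualVolInt n j K := by
        rw [integral_finsetSum _ fun j _ =>
          (hterm j).integrable_of_hasCompactSupport (.of_compactSpace _)]
        exact Finset.sum_congr rfl fun j _ => integral_const_mul _ _
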